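/- A box world state on S/I extends uniquely to a family of probability valuations on the measurement logics forming a 'cone': given a box world state p on S/I, there is a unique family (P_c)_{c ∈ C_{S/I}} where P_c is a probability valuation on the Boolean algebra 2^{2^c}, such that P_c(A) = Σ_{x ∈ A} p(x) for maximal c, and P_{c'} = P_c ∘ r_{c',c} for all c' ≤ c, where r_{c',c} : 2^{2^{c'}} → 2^{2^c} is the Boolean homomorphism induced by the restriction map 2^c → 2^{c'}. -/

import Mathlib

variable {S I : Type} [Fintype S] [DecidableEq S] [Fintype I]

/-- A context of the box presentation `π : S → I`: a subset of `S` on which `π` is injective. -/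
def IsCtx (π : S → I) (c : Finset S) : Prop := Set.InjOn π ↑c

/-- A maximal context. -/
def IsMaxCtx (π : S → I) (c : Finset S) : Prop :=
  IsCtx π c ∧ ∀ d : Finset S, IsCtx π d → c ⊆ d → d = c

/-- Outcomes in context `c`: functions `c → {0,1}`, encoded as boolean functions on `S`
vanishing outside `c`. -/
def Out (c : Finset S) : Type := { x : S → Bool // ∀ s, s ∉ c → x s = false }

instance (c : Finset S) : Fintype (Out c) := Subtype.fintype _
instance (c : Finset S) : DecidableEq (Out c) := Subtype.instDecidableEq

/-- Restriction of an outcome to a (smaller) context. -/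
def res {c : Finset S} (c' : Finset S) (x : Out c) : Out (c' : Finset S) :=
  ⟨fun s => if s ∈ c' then x.1 s else false, fun s hs => if_neg hs⟩

/-- A box world state: a `[0,1]`-valued map on outcomes over maximal contexts which is
normalised and non-signalling. (Values at non-maximal contexts are unconstrained.) -/
def IsBoxState (π : S → I) (p : ∀ c : Finset S, Out c → ℝ) : Prop :=
  (∀ c : Finset S, IsMaxCtx π c → ∀ x : Out c, 0 ≤ p c x ∧ p c x ≤ 1) ∧
  (∀ c : Finset S, IsMaxCtx π c → ∑ x : Out c, p c x = 1) ∧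
  (∀ c : Finset S, IsCtx π c → ∀ d d' : Finset S, IsMaxCtx π d → IsMaxCtx π d' →
    c ⊆ d → c ⊆ d' → ∀ x : Out c,
      ∑ y ∈ Finset.univ.filter (fun y : Out d => res c y = x), p d y =
      ∑ y ∈ Finset.univ.filter (fun y : Out d' => res c y = x), p d' y)

/-!
Every context lies in a maximal one, and by non-signalling the marginal of `p` on a context `c`
does not depend on the maximal context `d ⊇ c` it is computed from. Hence
`P_c A := ∑_{y ∈ Out d, y|_c ∈ A} p_d y` is well defined; as the push-forward of a probability
mass function it is a probability valuation, and transitivity of restriction gives the cone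
condition. Uniqueness holds because the cone condition for `c ⊆ d` with `d` maximal forces
this formula.
-/

open Finset

section PreimageMass

variable {α β γ : Type*} [Fintype α] [DecidableEq β]

def IsProbValuation [Fintype β] (P : Finset β → ℝ) : Prop :=
  (∀ A, 0 ≤ P A ∧ P A ≤ 1) ∧ (∀ A B, A ⊆ B → P A ≤ P B) ∧ P ∅ = 0 ∧ P univ = 1 ∧
    ∀ A B, P (A ∪ B) + P (A ∩ B) = P A + P B

def preimageMass (f : α → ℝ) (g : α → β) (A : Finset β) : ℝ :=
  ∑ a ∈ univ.filter (fun a => g a ∈ A), f a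

theorem preimageMass_id (f : β → ℝ) [Fintype β] (A : Finset β) :
    preimageMass f id A = ∑ b ∈ A, f b := by
  simp [preimageMass]

theorem preimageMass_comp [Fintype β] [DecidableEq γ] (f : α → ℝ) (g : α → β) (h : β → γ)
    (A : Finset γ) :
    preimageMass f (h ∘ g) A = preimageMass f g (univ.filter fun b => h b ∈ A) := by
  simp [preimageMass]

theorem preimageMass_eq_sum_fibers (f : α → ℝ) (g : α → β) (A : Finset β) :
    preimageMass f g A = ∑ b ∈ A, ∑ a ∈ univ.filter (fun a => g a = b), f a := by
  rw [preimageMass, ← sum_fiberwise_of_maps_to (g := g) fun a ha => (mem_filter.mp ha).2]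
  refine sum_congr rfl fun b hb => sum_congr ?_ fun _ _ => rfl
  ext a
  simp only [mem_filter, mem_univ, true_and, and_iff_right_iff_imp]
  exact fun hab => hab ▸ hb

theorem isProbValuation_preimageMass [Fintype β] {f : α → ℝ} (hf : ∀ a, 0 ≤ f a)
    (hf_sum : ∑ a, f a = 1) (g : α → β) : IsProbValuation (preimageMass f g) := by
  have mono : ∀ A B : Finset β, A ⊆ B → preimageMass f g A ≤ preimageMass f g B :=
    fun A B hAB => sum_le_sum_of_subset_of_nonneg (monotone_filter_right _ fun _ _ h => hAB h)
      fun a _ _ => hf a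
  have univ_eq : preimageMass f g univ = 1 := by simpa [preimageMass] using hf_sum
  refine ⟨fun A => ⟨sum_nonneg fun a _ => hf a, univ_eq ▸ mono A univ (subset_univ A)⟩,
    mono, by simp [preimageMass], univ_eq, fun A B => ?_⟩
  classical
  simp only [preimageMass, mem_union, mem_inter, filter_or, filter_and]
  exact sum_union_inter

end PreimageMass

omit [DecidableEq S] [Fintype I] in
theorem exists_isMaxCtx_superset (π : S → I) {c : Finset S} (hc : IsCtx π c) :
    ∃ d, IsMaxCtx π d ∧ c ⊆ d := by
  obtain ⟨d, hcd, hd⟩ := Finite.exists_le_maximal (p := IsCtx π) hc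
  exact ⟨d, ⟨hd.1, fun e he hde => Maximal.eq_of_ge hd he hde⟩, hcd⟩

omit [Fintype S] in
theorem res_res {d : Finset S} {c' c : Finset S} (h : c' ⊆ c) (z : Out d) :
    res c' (res c z) = res c' z := by
  apply Subtype.ext; funext s
  by_cases hs : s ∈ c'
  · simp [res, hs, h hs]
  · simp [res, hs]

omit [Fintype S] in
theorem res_self {c : Finset S} : (res c : Out c → Out c) = id := by
  funext z; apply Subtype.ext; funext s
  by_cases hs : s ∈ c <;> simp [res, hs, z.2 s]

omit [Fintype I] in
theorem IsBoxState.preimageMass_res_eq {π : S → I} {p : ∀ c : Finset S, Out c → ℝ}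
    (hp : IsBoxState π p) {c d d' : Finset S} (hc : IsCtx π c) (hd : IsMaxCtx π d)
    (hd' : IsMaxCtx π d') (hcd : c ⊆ d) (hcd' : c ⊆ d') (A : Finset (Out c)) :
    preimageMass (p d) (res c) A = preimageMass (p d') (res c) A := by
  rw [preimageMass_eq_sum_fibers, preimageMass_eq_sum_fibers]
  exact sum_congr rfl fun x _ => hp.2.2 c hc d d' hd hd' hcd hcd' x

theorem boxState_extends_to_valuation_cone_general (π : S → I)
    (p : ∀ c : Finset S, Out c → ℝ) (hp : IsBoxState π p) :
    ∃! P : ∀ c : {c : Finset S // IsCtx π c}, Finset (Out c.1) → ℝ,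
      -- each `P c` is a probability valuation on the Boolean algebra `2^{2^c}`
      (∀ c : {c : Finset S // IsCtx π c},
        (∀ A : Finset (Out c.1), 0 ≤ P c A ∧ P c A ≤ 1) ∧
        (∀ A B : Finset (Out c.1), A ⊆ B → P c A ≤ P c B) ∧
        P c ∅ = 0 ∧ P c Finset.univ = 1 ∧
        (∀ A B : Finset (Out c.1), P c (A ∪ B) + P c (A ∩ B) = P c A + P c B)) ∧
      -- on maximal contexts, `P_c` is given by summing `p`
      (∀ c : {c : Finset S // IsCtx π c}, IsMaxCtx π c.1 →
        ∀ A : Finset (Out c.1), P c A = ∑ x ∈ A, p c.1 x) ∧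
      -- the cone condition: `P_{c'} = P_c ∘ r_{c',c}` for `c' ≤ c`
      (∀ c' c : {c : Finset S // IsCtx π c}, c'.1 ⊆ c.1 →
        ∀ A : Finset (Out c'.1),
          P c' A = P c (Finset.univ.filter (fun y : Out c.1 => res c'.1 y ∈ A))) := by
  choose m hm hcm using fun c : {c : Finset S // IsCtx π c} => exists_isMaxCtx_superset π c.2
  have marginal_eq {c : {c : Finset S // IsCtx π c}} {d : Finset S} (hd : IsMaxCtx π d)
      (hcd : c.1 ⊆ d) (A : Finset (Out c.1)) :
      preimageMass (p (m c)) (res c.1) A = preimageMass (p d) (res c.1) A :=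
    hp.preimageMass_res_eq c.2 (hm c) hd (hcm c) hcd A
  refine ⟨fun c => preimageMass (p (m c)) (res c.1), ⟨fun c => ?_, fun c hc A => ?_,
    fun c' c hc'c A => ?_⟩, fun Q ⟨_, hQ_max, hQ_cone⟩ => ?_⟩
  · exact isProbValuation_preimageMass (fun y => (hp.1 _ (hm c) y).1) (hp.2.1 _ (hm c)) _
  · dsimp only
    rw [marginal_eq hc subset_rfl, res_self, preimageMass_id]
  · dsimp only
    rw [marginal_eq (hm c) (hc'c.trans (hcm c)), ← preimageMass_comp]
    congr 1
    funext y
    exact (res_res hc'c y).symm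
  · funext c A
    rw [hQ_cone c ⟨m c, (hm c).1⟩ (hcm c), hQ_max ⟨m c, (hm c).1⟩ (hm c), preimageMass]

/-- A box world state on `S/I` extends uniquely to a cone of
probability valuations on the measurement logics: given a box world state `p`,
there is a unique family `(P_c)` of probability valuations on the Boolean
algebras `2^{2^c}` of subsets of outcomes, such that `P_c A = ∑_{x ∈ A} p x`
for maximal `c`, and `P_{c'} = P_c ∘ r_{c',c}` for all `c' ≤ c`, where
`r_{c',c}` is the Boolean homomorphism induced by restriction of outcomes. -/
theorem boxState_extends_to_valuation_cone (π : S → I)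
    (p : ∀ c : Finset S, Out c → ℝ) (hp : IsBoxState π p)
    (hp01 : ∀ c : Finset S, IsMaxCtx π c → ∀ x : Out c, 0 ≤ p c x ∧ p c x ≤ 1) :
    ∃! P : ∀ c : {c : Finset S // IsCtx π c}, Finset (Out c.1) → ℝ,
      -- each `P c` is a probability valuation on the Boolean algebra `2^{2^c}`
      (∀ c : {c : Finset S // IsCtx π c},
        (∀ A : Finset (Out c.1), 0 ≤ P c A ∧ P c A ≤ 1) ∧
        (∀ A B : Finset (Out c.1), A ⊆ B → P c A ≤ P c B) ∧
        P c ∅ = 0 ∧ P c Finset.univ = 1 ∧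
        (∀ A B : Finset (Out c.1), P c (A ∪ B) + P c (A ∩ B) = P c A + P c B)) ∧
      -- on maximal contexts, `P_c` is given by summing `p`
      (∀ c : {c : Finset S // IsCtx π c}, IsMaxCtx π c.1 →
        ∀ A : Finset (Out c.1), P c A = ∑ x ∈ A, p c.1 x) ∧
      -- the cone condition: `P_{c'} = P_c ∘ r_{c',c}` for `c' ≤ c`
      (∀ c' c : {c : Finset S // IsCtx π c}, c'.1 ⊆ c.1 →
        ∀ A : Finset (Out c'.1),
          P c' A = P c (Finset.univ.filter (fun y : Out c.1 => res c'.1 y ∈ A))) :=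
  boxState_extends_to_valuation_cone_general π p hp
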